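/- The quantity 1/(t_k(t_k+1)) equals the decrease 1/t_k − 1/(t_k+1), is strictly positive and strictly decreasing in t_k for positive integers t_k, so repeatedly pulling the arm with the largest ζ_k/(t_k(t_k+1)) equalizes the weighted pull counts up to multiplicative constants: in the limit, t_k/t → sqrt(ζ_k)/Σ_s sqrt(ζ_s). -/

import Mathlib

/-!
Whenever arm `k` is pulled, its index `ζ_k / (t_k (t_k + 1))` is the largest one, and afterwards
every index only decreases. Hence, as soon as `k` has been pulled once,
`ζ_j / (t_j (t_j + 1)) ≤ ζ_k / ((t_k - 1) t_k)` for every arm `j`, which after taking square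
roots reads `√ζ_j (t_k - 1) ≤ √ζ_k (t_j + 1)`. The indices tend to `0`, so every arm is pulled
infinitely often; the two-sided bound `|√ζ_k t_j - √ζ_j t_k| ≤ √ζ_j + √ζ_k` then gives
`t_j / t_k → √ζ_j / √ζ_k`, and summing over `j` gives the limit of `t_k / t`.
-/

open Filter Topology

lemma div_mul_add_one_strictAntiOn {z : ℝ} (hz : 0 < z) :
    StrictAntiOn (fun x : ℝ => z / (x * (x + 1))) (Set.Ioi 0) := by
  intro a (ha : 0 < a) b (hb : 0 < b) hab
  rw [div_lt_div_iff_of_pos_left hz (by positivity) (by positivity)]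
  nlinarith

lemma sqrt_mul_sub_one_le_of_div_le {x y a b : ℝ} (hx : 0 ≤ x) (hy : 0 ≤ y) (ha : 1 < a)
    (hb : 0 < b) (h : x / (b * (b + 1)) ≤ y / ((a - 1) * a)) :
    √x * (a - 1) ≤ √y * (b + 1) := by
  rw [div_le_div_iff₀ (by positivity) (by nlinarith)] at h
  rw [← sq_le_sq₀ (mul_nonneg (Real.sqrt_nonneg x) (by linarith)) (by positivity),
    mul_pow, mul_pow, Real.sq_sqrt hx, Real.sq_sqrt hy]
  nlinarith

lemma tendsto_div_of_abs_mul_sub_mul_le {α : Type*} {l : Filter α} {a b : α → ℝ} {p q C : ℝ}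
    (hq : q ≠ 0) (ha : Tendsto a l atTop) (h : ∀ᶠ x in l, |q * b x - p * a x| ≤ C) :
    Tendsto (fun x => b x / a x) l (𝓝 (p / q)) := by
  rw [tendsto_iff_norm_sub_tendsto_zero]
  refine squeeze_zero' (.of_forall fun _ => norm_nonneg _) ?_
    (tendsto_const_nhds (x := C / |q|).div_atTop ha)
  filter_upwards [h, ha.eventually_gt_atTop 0] with x hx hax
  have hdiff : b x / a x - p / q = (q * b x - p * a x) / (q * a x) := by
    field_simp
  rw [Real.norm_eq_abs, hdiff, abs_div, abs_mul, abs_of_pos hax, div_div]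
  gcongr

lemma tendsto_div_sum_of_tendsto_div {ι α : Type*} [Fintype ι] {l : Filter α} {f : α → ι → ℝ}
    {c : ι → ℝ} {k : ι} (hc : ∑ s, c s ≠ 0) (hck : c k ≠ 0)
    (h : ∀ s, Tendsto (fun x => f x s / f x k) l (𝓝 (c s / c k))) :
    Tendsto (fun x => f x k / ∑ s, f x s) l (𝓝 (c k / ∑ s, c s)) := by
  have hsum := (tendsto_finsetSum Finset.univ fun s _ => h s).inv₀
    (by rw [← Finset.sum_div]; exact div_ne_zero hc hck)
  simpa only [← Finset.sum_div, inv_div] using hsum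

noncomputable def pullIndex {ι : Type*} (ζ : ι → ℝ) (k : ι) (n : ℕ) : ℝ :=
  ζ k / ((n : ℝ) * (n + 1))

section pullIndex

variable {ι : Type*} {ζ : ι → ℝ}

lemma pullIndex_pos (hζ : ∀ k, 0 < ζ k) (k : ι) {n : ℕ} (hn : 1 ≤ n) : 0 < pullIndex ζ k n := by
  have hn' : (0 : ℝ) < n := by exact_mod_cast hn
  exact div_pos (hζ k) (by positivity)

lemma pullIndex_antitoneOn (hζ : ∀ k, 0 < ζ k) (k : ι) :
    AntitoneOn (pullIndex ζ k) (Set.Ici 1) := by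
  intro m (hm : 1 ≤ m) n (hn : 1 ≤ n) hmn
  have hm' : (0 : ℝ) < m := by exact_mod_cast hm
  have hn' : (0 : ℝ) < n := by exact_mod_cast hn
  exact (div_mul_add_one_strictAntiOn (hζ k)).antitoneOn hm' hn' (by exact_mod_cast hmn)

lemma tendsto_pullIndex (k : ι) : Tendsto (pullIndex ζ k) atTop (𝓝 0) :=
  tendsto_const_nhds.div_atTop <| tendsto_natCast_atTop_atTop.atTop_mul_atTop₀ <|
    tendsto_natCast_atTop_atTop.atTop_add tendsto_const_nhds

end pullIndex

structure IsGreedyAllocation {ι : Type*} [DecidableEq ι] (w : ι → ℕ → ℝ) (counts : ℕ → ι → ℕ) :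
    Prop where
  one_le_zero : ∀ k, 1 ≤ counts 0 k
  step : ∀ τ, ∃ c, (∀ k, counts (τ + 1) k = counts τ k + if k = c then 1 else 0) ∧
    ∀ s, w s (counts τ s) ≤ w c (counts τ c)

namespace IsGreedyAllocation

variable {ι : Type*} [DecidableEq ι] {w : ι → ℕ → ℝ} {ζ : ι → ℝ} {counts : ℕ → ι → ℕ}

theorem monotone_counts (hg : IsGreedyAllocation w counts) (k : ι) :
    Monotone (counts · k) := by
  refine monotone_nat_of_le_succ fun τ => ?_
  obtain ⟨c, hc, -⟩ := hg.step τ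
  rw [hc k]
  exact Nat.le_add_right _ _

theorem one_le_counts (hg : IsGreedyAllocation w counts) (τ : ℕ) (k : ι) : 1 ≤ counts τ k :=
  (hg.one_le_zero k).trans (hg.monotone_counts k τ.zero_le)

theorem sum_counts [Fintype ι] (hg : IsGreedyAllocation w counts) (τ : ℕ) :
    ∑ s, counts τ s = ∑ s, counts 0 s + τ := by
  induction τ with
  | zero => rfl
  | succ τ ih =>
    obtain ⟨c, hc, -⟩ := hg.step τ
    simp only [hc, Finset.sum_add_distrib, Finset.sum_ite_eq', Finset.mem_univ, if_true, ih]
    ring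

theorem index_succ_le (hw : ∀ k, AntitoneOn (w k) (Set.Ici 1))
    (hg : IsGreedyAllocation w counts) (τ : ℕ) (j : ι) :
    w j (counts (τ + 1) j) ≤ w j (counts τ j) :=
  hw j (hg.one_le_counts τ j) (hg.one_le_counts (τ + 1) j) (hg.monotone_counts j τ.le_succ)

theorem index_le_of_pulled (hw : ∀ k, AntitoneOn (w k) (Set.Ici 1))
    (hg : IsGreedyAllocation w counts) {τ : ℕ} {k : ι} (hk : counts 0 k < counts τ k) (j : ι) :
    w j (counts τ j) ≤ w k (counts τ k - 1) := by
  induction τ generalizing k with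
  | zero => exact absurd hk (lt_irrefl _)
  | succ τ ih =>
    obtain ⟨c, hc, hmax⟩ := hg.step τ
    refine (hg.index_succ_le hw τ j).trans ?_
    by_cases hkc : k = c
    · subst hkc
      simpa [hc k] using hmax j
    · have hk' : counts (τ + 1) k = counts τ k := by simp [hc k, hkc]
      exact hk' ▸ ih (hk' ▸ hk)

theorem exists_tendsto_atTop [Fintype ι] [Nonempty ι] (hg : IsGreedyAllocation w counts) :
    ∃ j, Tendsto (counts · j) atTop atTop := by
  by_contra! hbdd
  have hbounded : ∀ j, ∃ b, ∀ τ, counts τ j < b := fun j => by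
    by_contra! h
    exact hbdd j (tendsto_atTop_atTop_of_monotone (hg.monotone_counts j) h)
  choose b hb using hbounded
  have hlt := Finset.sum_lt_sum_of_nonempty Finset.univ_nonempty
    fun j (_ : j ∈ Finset.univ) => hb j (∑ s, b s)
  rw [hg.sum_counts] at hlt
  omega

theorem tendsto_counts_atTop [Fintype ι] (hw : ∀ k, AntitoneOn (w k) (Set.Ici 1))
    (hpos : ∀ k n, 1 ≤ n → 0 < w k n) (hlim : ∀ k, Tendsto (w k) atTop (𝓝 0))
    (hg : IsGreedyAllocation w counts) (k : ι) : Tendsto (counts · k) atTop atTop := by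
  have : Nonempty ι := ⟨k⟩
  obtain ⟨j, hj⟩ := hg.exists_tendsto_atTop
  refine tendsto_atTop_atTop_of_monotone (hg.monotone_counts k) ?_
  by_contra! hbdd
  obtain ⟨b, hb⟩ := hbdd
  have hb1 : 1 ≤ b := (hg.one_le_counts 0 k).trans (hb 0).le
  have hsmall : ∀ᶠ τ in atTop, w j (counts τ j - 1) < w k b :=
    ((hlim j).comp ((tendsto_sub_atTop_nat 1).comp hj)).eventually (gt_mem_nhds (hpos k b hb1))
  obtain ⟨τ, hτ, hpulled⟩ := (hsmall.and (hj.eventually_gt_atTop (counts 0 j))).exists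
  have hbig : w k b ≤ w k (counts τ k) :=
    hw k (hg.one_le_counts τ k) hb1 (hb τ).le
  exact (hbig.trans (hg.index_le_of_pulled hw hpulled k)).not_gt hτ

theorem sqrt_mul_sub_one_le (hζ : ∀ k, 0 < ζ k) (hg : IsGreedyAllocation (pullIndex ζ) counts)
    {τ : ℕ} {k : ι} (hk : counts 0 k < counts τ k) (j : ι) :
    √(ζ j) * ((counts τ k : ℝ) - 1) ≤ √(ζ k) * ((counts τ j : ℝ) + 1) := by
  have h := hg.index_le_of_pulled (pullIndex_antitoneOn hζ) hk j
  have hk2 : (1 : ℝ) < counts τ k := by exact_mod_cast (hg.one_le_zero k).trans_lt hk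
  have hj1 : (0 : ℝ) < counts τ j := by exact_mod_cast hg.one_le_counts τ j
  unfold pullIndex at h
  rw [Nat.cast_sub (hg.one_le_counts τ k), Nat.cast_one, sub_add_cancel] at h
  exact sqrt_mul_sub_one_le_of_div_le (hζ j).le (hζ k).le hk2 hj1 h

theorem tendsto_counts_div_counts [Fintype ι] (hζ : ∀ k, 0 < ζ k)
    (hg : IsGreedyAllocation (pullIndex ζ) counts) (j k : ι) :
    Tendsto (fun τ => (counts τ j : ℝ) / counts τ k) atTop (𝓝 (√(ζ j) / √(ζ k))) := by
  have htop : ∀ i, Tendsto (counts · i) atTop atTop :=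
    hg.tendsto_counts_atTop (pullIndex_antitoneOn hζ) (fun i _ => pullIndex_pos hζ i)
      tendsto_pullIndex
  refine tendsto_div_of_abs_mul_sub_mul_le (C := √(ζ j) + √(ζ k)) (Real.sqrt_pos.2 (hζ k)).ne'
    (tendsto_natCast_atTop_atTop.comp (htop k)) ?_
  filter_upwards [(htop j).eventually_gt_atTop (counts 0 j),
    (htop k).eventually_gt_atTop (counts 0 k)] with τ hj hk
  have hjk := hg.sqrt_mul_sub_one_le hζ hk j
  have hkj := hg.sqrt_mul_sub_one_le hζ hj k
  rw [abs_le]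
  constructor <;> linarith

end IsGreedyAllocation

theorem stmt17_general (K : ℕ) (ζ : Fin K → ℝ) (hζ : ∀ k, 0 < ζ k)
    (counts : ℕ → Fin K → ℕ)
    (hinit : ∀ k, 1 ≤ counts 0 k)
    (hstep : ∀ τ : ℕ, ∃ c : Fin K,
      (∀ k, counts (τ + 1) k = counts τ k + if k = c then 1 else 0) ∧
      (∀ s, ζ s / ((counts τ s : ℝ) * (counts τ s + 1)) ≤
            ζ c / ((counts τ c : ℝ) * (counts τ c + 1)))) :
    (∀ a : ℕ, 1 ≤ a →
      ((1 : ℝ) / ((a : ℝ) * (a + 1)) = 1 / (a : ℝ) - 1 / ((a : ℝ) + 1)) ∧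
      (0 < (1 : ℝ) / ((a : ℝ) * (a + 1))) ∧
      (∀ b : ℕ, a < b →
        (1 : ℝ) / ((b : ℝ) * (b + 1)) < 1 / ((a : ℝ) * (a + 1)))) ∧
    (∀ k, Tendsto (fun τ => (counts τ k : ℝ) / (∑ s, (counts τ s : ℝ)))
      atTop (nhds (Real.sqrt (ζ k) / ∑ s, Real.sqrt (ζ s)))) := by
  refine ⟨fun a ha => ?_, fun k => ?_⟩
  · have ha' : (0 : ℝ) < a := by exact_mod_cast ha
    refine ⟨by field_simp; ring, by positivity, fun b hab => ?_⟩
    exact div_mul_add_one_strictAntiOn one_pos ha' (ha'.trans (by exact_mod_cast hab))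
      (by exact_mod_cast hab)
  · have hg : IsGreedyAllocation (pullIndex ζ) counts := ⟨hinit, hstep⟩
    have hsqrt : ∀ s, 0 < √(ζ s) := fun s => Real.sqrt_pos.2 (hζ s)
    exact tendsto_div_sum_of_tendsto_div
      (Finset.sum_pos (fun s _ => hsqrt s) ⟨k, Finset.mem_univ k⟩).ne' (hsqrt k).ne'
      fun s => hg.tendsto_counts_div_counts hζ s k

/-- The quantity `1/(t_k(t_k+1))` equals the decrease
`1/t_k − 1/(t_k+1)`, is strictly positive and strictly decreasing in `t_k` for
positive integers `t_k`; consequently, under the greedy index rule that repeatedly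
pulls the arm with the largest `ζ_k/(t_k(t_k+1))`, the fraction of pulls allocated
to each arm satisfies `t_k/t → sqrt(ζ_k)/∑_s sqrt(ζ_s)`. -/
theorem stmt17 (K : ℕ) (hK : 0 < K) (ζ : Fin K → ℝ) (hζ : ∀ k, 0 < ζ k)
    (counts : ℕ → Fin K → ℕ)
    (hinit : ∀ k, 1 ≤ counts 0 k)
    (hstep : ∀ τ : ℕ, ∃ c : Fin K,
      (∀ k, counts (τ + 1) k = counts τ k + if k = c then 1 else 0) ∧
      (∀ s, ζ s / ((counts τ s : ℝ) * (counts τ s + 1)) ≤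
            ζ c / ((counts τ c : ℝ) * (counts τ c + 1)))) :
    (∀ a : ℕ, 1 ≤ a →
      ((1 : ℝ) / ((a : ℝ) * (a + 1)) = 1 / (a : ℝ) - 1 / ((a : ℝ) + 1)) ∧
      (0 < (1 : ℝ) / ((a : ℝ) * (a + 1))) ∧
      (∀ b : ℕ, a < b →
        (1 : ℝ) / ((b : ℝ) * (b + 1)) < 1 / ((a : ℝ) * (a + 1)))) ∧
    (∀ k, Tendsto (fun τ => (counts τ k : ℝ) / (∑ s, (counts τ s : ℝ)))
      atTop (nhds (Real.sqrt (ζ k) / ∑ s, Real.sqrt (ζ s)))) :=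
  stmt17_general K ζ hζ counts hinit hstep
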